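/- For every real t, every vector φ ∈ V, and every index n ∈ ℕ, the Heisenberg-series for the time-evolved position operator converges coordinatewise and has the closed form: Σ_{k=0}^∞ (t^k / k!) · (ad^k(X) φ)(n) converges (absolutely) and equals the n-th coordinate of [X + (1/2)·sinh(2t)·P + (cosh(2t) − 1)·(X − (1/2)·id)] φ. -/

import Mathlib

open Complex Finsupp

/-- The position operator `X` on the space of finitely supported complex sequences:
`X δ_l = (l+1) δ_l`. -/
noncomputable def Xop : (ℕ →₀ ℂ) →ₗ[ℂ] (ℕ →₀ ℂ) :=
  Finsupp.linearCombination ℂ fun l : ℕ => ((l : ℂ) + 1) • Finsupp.single l 1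

/-- The effective single-excitation Hamiltonian `E`:
`E δ_l = i (l+1) δ_{l+1} - i l δ_{l-1}` (the second term vanishing for `l = 0`). -/
noncomputable def Eop : (ℕ →₀ ℂ) →ₗ[ℂ] (ℕ →₀ ℂ) :=
  Finsupp.linearCombination ℂ fun l : ℕ =>
    (Complex.I * ((l : ℂ) + 1)) • Finsupp.single (l + 1) 1
      - (Complex.I * (l : ℂ)) • Finsupp.single (l - 1) 1

/-- The momentum-type operator `P`:
`P δ_l = (l+1) δ_{l+1} + l δ_{l-1}` (the second term vanishing for `l = 0`). -/
noncomputable def Pop : (ℕ →₀ ℂ) →ₗ[ℂ] (ℕ →₀ ℂ) :=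
  Finsupp.linearCombination ℂ fun l : ℕ =>
    ((l : ℂ) + 1) • Finsupp.single (l + 1) 1 + (l : ℂ) • Finsupp.single (l - 1) 1


/-- The generator of Heisenberg-picture time evolution: `ad A = i (E ∘ A - A ∘ E)`. -/
noncomputable def adE :
    ((ℕ →₀ ℂ) →ₗ[ℂ] (ℕ →₀ ℂ)) → ((ℕ →₀ ℂ) →ₗ[ℂ] (ℕ →₀ ℂ)) :=
  fun A => Complex.I • (Eop ∘ₗ A - A ∘ₗ Eop)

/-!
With the ladder operators `R δ_l = (l+1) δ_{l+1}` and `L δ_l = l δ_{l-1}` one has `E = i (R - L)`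
and `P = R + L`, so `ad A = A (R - L) - (R - L) A`. The relations `[X, R] = R`, `[X, L] = -L` and
`[R, L] = 1 - 2X` give `ad X = ad Q = P` and `ad P = 4 Q` for `Q = X - 1/2`; hence
`ad^(2m+1) X = 4^m P` and `ad^(2m+2) X = 4^(m+1) Q`. Apart from its `k = 0` term `X`, the Heisenberg
series is therefore `Q` times the even part and `P/2` times the odd part of the exponential series
at `2t`, that is `X - Q + cosh (2t) Q + sinh (2t) / 2 P`.
-/

theorem hasSum_pow_div_factorial_smul_of_even_odd {E : Type*} [AddCommMonoid E] [Module ℝ E]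
    [TopologicalSpace E] [ContinuousAdd E] [ContinuousSMul ℝ E] {f : ℕ → E} {a b : E}
    (heven : ∀ m, f (2 * m) = (4 : ℝ) ^ m • a) (hodd : ∀ m, f (2 * m + 1) = (4 : ℝ) ^ m • b)
    (t : ℝ) :
    HasSum (fun k => (t ^ k / k.factorial) • f k)
      (Real.cosh (2 * t) • a + (Real.sinh (2 * t) / 2) • b) := by
  refine HasSum.even_add_odd ?_ ?_
  · convert (Real.hasSum_cosh (2 * t)).smul_const a using 2 with m
    rw [heven, smul_smul, mul_pow, pow_mul (2 : ℝ)]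
    congr 1
    norm_num
    ring
  · convert ((Real.hasSum_sinh (2 * t)).div_const 2).smul_const b using 2 with m
    rw [hodd, smul_smul, mul_pow, pow_succ (2 : ℝ), pow_mul (2 : ℝ)]
    congr 1
    norm_num
    ring

theorem hasSum_pow_div_factorial_smul_of_even_odd_succ {E : Type*} [AddCommGroup E] [Module ℝ E]
    [TopologicalSpace E] [IsTopologicalAddGroup E] [ContinuousSMul ℝ E] {f : ℕ → E} {a b : E}
    (heven : ∀ m, f (2 * m + 2) = (4 : ℝ) ^ (m + 1) • a)
    (hodd : ∀ m, f (2 * m + 1) = (4 : ℝ) ^ m • b) (t : ℝ) :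
    HasSum (fun k => (t ^ k / k.factorial) • f k)
      (f 0 - a + Real.cosh (2 * t) • a + (Real.sinh (2 * t) / 2) • b) := by
  have hg_even : ∀ m, Function.update f 0 a (2 * m) = (4 : ℝ) ^ m • a := by
    rintro (_ | m)
    · simp
    · simpa [Function.update, mul_add] using heven m
  have hg_odd : ∀ m, Function.update f 0 a (2 * m + 1) = (4 : ℝ) ^ m • b := by
    intro m
    simpa [Function.update] using hodd m
  convert (hasSum_pow_div_factorial_smul_of_even_odd hg_even hg_odd t).update 0 (f 0) using 1
  · ext k
    rcases k with _ | k <;> simp [Function.update]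
  · simp [add_assoc]

theorem summable_norm_pow_div_factorial_smul_of_even_odd_succ {E : Type*} [SeminormedAddCommGroup E]
    [NormedSpace ℝ E] {f : ℕ → E} {a b : E}
    (heven : ∀ m, f (2 * m + 2) = (4 : ℝ) ^ (m + 1) • a)
    (hodd : ∀ m, f (2 * m + 1) = (4 : ℝ) ^ m • b) (t : ℝ) :
    Summable fun k => ‖(t ^ k / k.factorial) • f k‖ := by
  have hnorm_even : ∀ m, ‖f (2 * m + 2)‖ = (4 : ℝ) ^ (m + 1) • ‖a‖ := by
    intro m
    rw [heven, norm_smul, smul_eq_mul, norm_pow, Real.norm_ofNat]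
  have hnorm_odd : ∀ m, ‖f (2 * m + 1)‖ = (4 : ℝ) ^ m • ‖b‖ := by
    intro m
    rw [hodd, norm_smul, smul_eq_mul, norm_pow, Real.norm_ofNat]
  refine (hasSum_pow_div_factorial_smul_of_even_odd_succ (f := fun k => ‖f k‖) hnorm_even
    hnorm_odd |t|).summable.congr fun k => ?_
  rw [norm_smul, smul_eq_mul, Real.norm_eq_abs, abs_div, abs_pow, Nat.abs_cast]

noncomputable def raiseOp : (ℕ →₀ ℂ) →ₗ[ℂ] (ℕ →₀ ℂ) :=
  linearCombination ℂ fun l : ℕ => ((l : ℂ) + 1) • single (l + 1) 1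

noncomputable def lowerOp : (ℕ →₀ ℂ) →ₗ[ℂ] (ℕ →₀ ℂ) :=
  linearCombination ℂ fun l : ℕ => (l : ℂ) • single (l - 1) 1

noncomputable def Qop : (ℕ →₀ ℂ) →ₗ[ℂ] (ℕ →₀ ℂ) :=
  Xop - ((1 : ℂ) / 2) • LinearMap.id

@[simp] lemma Xop_single (l : ℕ) : Xop (single l 1) = ((l : ℂ) + 1) • single l 1 := by
  simp [Xop]

@[simp] lemma raiseOp_single (l : ℕ) :
    raiseOp (single l 1) = ((l : ℂ) + 1) • single (l + 1) 1 := by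
  simp [raiseOp]

@[simp] lemma lowerOp_single_zero : lowerOp (single 0 1) = 0 := by
  simp [lowerOp]

@[simp] lemma lowerOp_single_succ (m : ℕ) :
    lowerOp (single (m + 1) 1) = ((m : ℂ) + 1) • single m 1 := by
  simp [lowerOp]

lemma Eop_apply (v : ℕ →₀ ℂ) : Eop v = I • (raiseOp v - lowerOp v) := by
  suffices Eop = I • (raiseOp - lowerOp) from LinearMap.congr_fun this v
  ext l : 2
  simp [Eop, raiseOp, lowerOp, smul_sub, mul_smul]

lemma Pop_apply (v : ℕ →₀ ℂ) : Pop v = raiseOp v + lowerOp v := by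
  suffices Pop = raiseOp + lowerOp from LinearMap.congr_fun this v
  ext l : 2
  simp [Pop, raiseOp, lowerOp]

lemma Qop_apply (v : ℕ →₀ ℂ) : Qop v = Xop v - ((1 : ℂ) / 2) • v := rfl

/- The commutation relations are stated pointwise: on `Module.End ℂ (ℕ →₀ ℂ)` the ring instance
does not unify reducibly with `Finsupp.instAddCommMonoid`, so ring tactics fail on operators. -/

lemma Xop_raiseOp_sub_raiseOp_Xop (v : ℕ →₀ ℂ) :
    Xop (raiseOp v) - raiseOp (Xop v) = raiseOp v := by
  suffices Xop ∘ₗ raiseOp - raiseOp ∘ₗ Xop = raiseOp from LinearMap.congr_fun this v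
  ext l : 2
  simp only [LinearMap.comp_apply, lsingle_apply, LinearMap.sub_apply, map_smul, Xop_single,
    raiseOp_single]
  push_cast
  module

lemma Xop_lowerOp_sub_lowerOp_Xop (v : ℕ →₀ ℂ) :
    Xop (lowerOp v) - lowerOp (Xop v) = -lowerOp v := by
  suffices Xop ∘ₗ lowerOp - lowerOp ∘ₗ Xop = -lowerOp from LinearMap.congr_fun this v
  ext (_ | m) : 2 <;>
  simp only [LinearMap.comp_apply, lsingle_apply, LinearMap.sub_apply, LinearMap.neg_apply,
    map_smul, map_zero, Xop_single, lowerOp_single_zero, lowerOp_single_succ] <;>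
  push_cast <;>
  module

lemma raiseOp_lowerOp_sub_lowerOp_raiseOp (v : ℕ →₀ ℂ) :
    raiseOp (lowerOp v) - lowerOp (raiseOp v) = v - (2 : ℂ) • Xop v := by
  suffices raiseOp ∘ₗ lowerOp - lowerOp ∘ₗ raiseOp = LinearMap.id - (2 : ℂ) • Xop from
    LinearMap.congr_fun this v
  ext (_ | m) : 2 <;>
  simp only [LinearMap.comp_apply, lsingle_apply, LinearMap.sub_apply, LinearMap.smul_apply,
    LinearMap.id_apply, map_smul, map_zero, Xop_single, raiseOp_single, lowerOp_single_zero,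
    lowerOp_single_succ] <;>
  push_cast <;>
  module

lemma adE_apply (A : (ℕ →₀ ℂ) →ₗ[ℂ] (ℕ →₀ ℂ)) (v : ℕ →₀ ℂ) :
    adE A v = A (raiseOp v - lowerOp v) - (raiseOp (A v) - lowerOp (A v)) := by
  change I • (Eop (A v) - A (Eop v)) = _
  rw [Eop_apply, Eop_apply, map_smul, ← smul_sub, smul_smul, I_mul_I, neg_one_smul, neg_sub]

lemma adE_smul (c : ℂ) (A : (ℕ →₀ ℂ) →ₗ[ℂ] (ℕ →₀ ℂ)) : adE (c • A) = c • adE A := by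
  refine LinearMap.ext fun v => ?_
  simp only [adE_apply, LinearMap.smul_apply, map_smul]
  module

lemma adE_Xop : adE Xop = Pop := by
  refine LinearMap.ext fun v => ?_
  simp only [adE_apply, Pop_apply, map_sub]
  linear_combination (norm := module)
    Xop_raiseOp_sub_raiseOp_Xop v - Xop_lowerOp_sub_lowerOp_Xop v

lemma adE_Qop : adE Qop = Pop := by
  rw [← adE_Xop]
  refine LinearMap.ext fun v => ?_
  simp only [adE_apply, Qop_apply, map_sub, map_smul]
  module

lemma adE_Pop : adE Pop = (4 : ℂ) • Qop := by
  refine LinearMap.ext fun v => ?_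
  simp only [adE_apply, Pop_apply, Qop_apply, LinearMap.smul_apply, map_add, map_sub]
  linear_combination (norm := module) (-2 : ℂ) • raiseOp_lowerOp_sub_lowerOp_raiseOp v

lemma adE_iterate_two_mul_Qop (m : ℕ) : adE^[2 * m] Qop = (4 : ℂ) ^ m • Qop := by
  induction m with
  | zero => simp
  | succ m ih =>
    rw [mul_add, mul_one, add_comm, Function.iterate_add_apply, ih, Function.iterate_succ_apply,
      Function.iterate_one, adE_smul, adE_smul, adE_Qop, adE_Pop, smul_smul, pow_succ]

lemma adE_iterate_Xop_odd (m : ℕ) : adE^[2 * m + 1] Xop = (4 : ℂ) ^ m • Pop := by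
  rw [Function.iterate_succ_apply, adE_Xop, ← adE_Qop, ← Function.iterate_succ_apply,
    Function.iterate_succ_apply', adE_iterate_two_mul_Qop, adE_smul, adE_Qop]

lemma adE_iterate_Xop_even (m : ℕ) : adE^[2 * m + 2] Xop = (4 : ℂ) ^ (m + 1) • Qop := by
  rw [Function.iterate_succ_apply', adE_iterate_Xop_odd, adE_smul, adE_Pop, smul_smul, pow_succ]

/-- Coordinatewise convergence and closed form of the Heisenberg series of `X`:
for all `t : ℝ`, `φ` and coordinates `n`, the series `Σ_k (t^k/k!) (ad^k(X) φ)(n)`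
converges absolutely to the `n`-th coordinate of
`(X + (sinh(2t)/2) P + (cosh(2t) - 1)(X - id/2)) φ`. -/
theorem heisenberg_series_X (t : ℝ) (φ : ℕ →₀ ℂ) (n : ℕ) :
    Summable (fun k : ℕ => ‖((t ^ k / (k.factorial : ℝ) : ℝ) : ℂ) * ((adE^[k] Xop) φ) n‖) ∧
    HasSum (fun k : ℕ => ((t ^ k / (k.factorial : ℝ) : ℝ) : ℂ) * ((adE^[k] Xop) φ) n)
      (((Xop + ((Real.sinh (2 * t) / 2 : ℝ) : ℂ) • Pop
        + ((Real.cosh (2 * t) - 1 : ℝ) : ℂ) • (Xop - ((1 : ℂ) / 2) • (LinearMap.id : (ℕ →₀ ℂ) →ₗ[ℂ] (ℕ →₀ ℂ)))) φ) n) := by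
  simp only [← Complex.real_smul]
  have heven : ∀ m, (adE^[2 * m + 2] Xop) φ n = (4 : ℝ) ^ (m + 1) • Qop φ n := fun m => by
    simp [adE_iterate_Xop_even, Complex.real_smul]
  have hodd : ∀ m, (adE^[2 * m + 1] Xop) φ n = (4 : ℝ) ^ m • Pop φ n := fun m => by
    simp [adE_iterate_Xop_odd, Complex.real_smul]
  refine ⟨summable_norm_pow_div_factorial_smul_of_even_odd_succ
    (f := fun k => (adE^[k] Xop) φ n) heven hodd t, ?_⟩
  have hvalue : ((Xop + ((Real.sinh (2 * t) / 2 : ℝ) : ℂ) • Pop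
      + ((Real.cosh (2 * t) - 1 : ℝ) : ℂ) • Qop) φ) n
      = Xop φ n - Qop φ n + Real.cosh (2 * t) • Qop φ n + (Real.sinh (2 * t) / 2) • Pop φ n := by
    simp only [LinearMap.add_apply, LinearMap.smul_apply, Finsupp.add_apply, Finsupp.smul_apply,
      smul_eq_mul, Complex.real_smul]
    push_cast
    ring
  exact hvalue ▸ hasSum_pow_div_factorial_smul_of_even_odd_succ
    (f := fun k => (adE^[k] Xop) φ n) heven hodd t
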